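/- Let Φ be the standard normal CDF with density φ, and fix y ∈ {0,1}. Define l(x) = y·log Φ(x) + (1−y)·log(1−Φ(x)). Then the second derivative l''(x) is strictly negative for all x ∈ ℝ; that is, the probit log-likelihood contribution is strictly concave in the linear index. -/

import Mathlib

/-
Writing `Φ` for the standard normal CDF and `φ = Φ'`, one has `φ' x = -x φ x`, so
`(log Φ)'' = -φ (x Φ + φ) / Φ²`. The factor `x Φ(x) + φ(x) = ∫_{t ≤ x} (x - t) φ(t) dt` is
positive (Mills' inequality), which settles `y = 1`; the case `y = 0` reduces to it because
`1 - Φ(x) = Φ(-x)` and `x ↦ f(-x)` has second derivative `f''(-x)`.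
-/

open Real MeasureTheory ProbabilityTheory Set Filter

local notation "φ" => gaussianPDFReal 0 1

lemma integral_Iic_pos {f : ℝ → ℝ} {x : ℝ} (hf : IntegrableOn f (Iic x))
    (hpos : ∀ t < x, 0 < f t) : 0 < ∫ t in Iic x, f t := by
  rw [integral_Iic_eq_integral_Iio]
  refine (setIntegral_pos_iff_support_of_nonneg_ae ?_ (hf.mono_set Iio_subset_Iic_self)).2 ?_
  · filter_upwards [ae_restrict_mem measurableSet_Iio] with t ht using (hpos t ht).le
  · have : Iio x ⊆ Function.support f ∩ Iio x := fun t ht => ⟨(hpos t ht).ne', ht⟩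
    exact (measure_mono this).trans_lt' (by simp)

lemma deriv_deriv_comp_neg {𝕜 F : Type*} [NontriviallyNormedField 𝕜] [NormedAddCommGroup F]
    [NormedSpace 𝕜 F] (f : 𝕜 → F) (x : 𝕜) :
    deriv (deriv fun t => f (-t)) x = deriv (deriv f) (-x) := by
  have : deriv (fun t => f (-t)) = fun t => -deriv f (-t) := funext (deriv_comp_neg f)
  rw [this, deriv.fun_neg, deriv_comp_neg, neg_neg]

lemma hasDerivAt_gaussianPDFReal (μ : ℝ) (v : NNReal) (x : ℝ) :
    HasDerivAt (gaussianPDFReal μ v) (-((x - μ) / v) * gaussianPDFReal μ v x) x := by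
  have hexp : HasDerivAt (fun t => -(t - μ) ^ 2 / (2 * v)) (-((x - μ) / v)) x := by
    refine ((((hasDerivAt_id x).sub_const μ).pow 2).neg.div_const (2 * (v : ℝ))).congr_deriv ?_
    simp only [id, Nat.cast_ofNat]
    ring
  rw [gaussianPDFReal_def]
  exact (hexp.exp.const_mul (√(2 * π * v))⁻¹).congr_deriv (by ring)

lemma gaussianPDFReal_neg (μ : ℝ) (v : NNReal) (x : ℝ) :
    gaussianPDFReal μ v (-x) = gaussianPDFReal (-μ) v x := by
  simp only [gaussianPDFReal]
  ring_nf

lemma integrable_mul_gaussianPDFReal_zero_one : Integrable fun t => t * φ t := by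
  convert (integrable_mul_exp_neg_mul_sq (b := 2⁻¹) (by norm_num)).const_mul (√(2 * π))⁻¹
    using 2 with t
  simp only [gaussianPDFReal, NNReal.coe_one]
  ring_nf

noncomputable def stdNormalCDF (x : ℝ) : ℝ := ∫ t in Iic x, φ t

lemma stdNormalCDF_pos (x : ℝ) : 0 < stdNormalCDF x :=
  integral_Iic_pos (integrable_gaussianPDFReal 0 1).integrableOn
    fun t _ => gaussianPDFReal_pos 0 1 t one_ne_zero

lemma one_sub_stdNormalCDF (x : ℝ) : 1 - stdNormalCDF x = stdNormalCDF (-x) := by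
  have hsplit := intervalIntegral.integral_Iic_add_Ioi (b := x)
    (integrable_gaussianPDFReal 0 1).integrableOn (integrable_gaussianPDFReal 0 1).integrableOn
  rw [integral_gaussianPDFReal_eq_one 0 one_ne_zero] at hsplit
  have hsymm : ∫ t in Ioi x, φ t = stdNormalCDF (-x) := by
    simp_rw [stdNormalCDF, ← integral_comp_neg_Ioi, gaussianPDFReal_neg, neg_zero]
  rw [stdNormalCDF]
  linarith

lemma hasDerivAt_stdNormalCDF (x : ℝ) : HasDerivAt stdNormalCDF (φ x) x := by
  have hint (b : ℝ) : IntegrableOn φ (Iic b) := (integrable_gaussianPDFReal 0 1).integrableOn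
  have hcont : Continuous φ := by unfold gaussianPDFReal; fun_prop
  have : stdNormalCDF = fun u => stdNormalCDF 0 + ∫ t in (0 : ℝ)..u, φ t := by
    funext u
    rw [← intervalIntegral.integral_Iic_sub_Iic (hint 0) (hint u), stdNormalCDF, stdNormalCDF]
    ring
  rw [this]
  exact (intervalIntegral.integral_hasDerivAt_right
    (integrable_gaussianPDFReal 0 1).intervalIntegrable
    (hcont.stronglyMeasurableAtFilter _ _) hcont.continuousAt).const_add _

lemma integral_Iic_mul_gaussianPDFReal_zero_one (x : ℝ) : ∫ t in Iic x, t * φ t = -φ x := by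
  have hderiv : ∀ t, HasDerivAt (fun s => -φ s) (t * φ t) t := fun t => by
    simpa using (hasDerivAt_gaussianPDFReal 0 1 t).fun_neg
  have hint := integrable_mul_gaussianPDFReal_zero_one.integrableOn (s := Iic x)
  have hlim := tendsto_zero_of_hasDerivAt_of_integrableOn_Iic (fun t _ => hderiv t) hint
    (integrable_gaussianPDFReal 0 1).neg.integrableOn
  simpa using integral_Iic_of_hasDerivAt_of_tendsto' (fun t _ => hderiv t) hint hlim

lemma mul_stdNormalCDF_add_gaussianPDFReal_pos (x : ℝ) : 0 < x * stdNormalCDF x + φ x := by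
  have hφ := ((integrable_gaussianPDFReal 0 1).const_mul x).integrableOn (s := Iic x)
  have htφ := integrable_mul_gaussianPDFReal_zero_one.integrableOn (s := Iic x)
  have hrepr : x * stdNormalCDF x + φ x = ∫ t in Iic x, (x * φ t - t * φ t) := by
    rw [integral_sub hφ htφ, integral_const_mul, integral_Iic_mul_gaussianPDFReal_zero_one,
      stdNormalCDF, sub_neg_eq_add]
  rw [hrepr]
  refine integral_Iic_pos (hφ.sub htφ) fun t ht => ?_
  rw [← sub_mul]
  exact mul_pos (sub_pos.2 ht) (gaussianPDFReal_pos 0 1 t one_ne_zero)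

lemma deriv_log_stdNormalCDF :
    deriv (fun x => log (stdNormalCDF x)) = fun x => φ x / stdNormalCDF x :=
  funext fun x => ((hasDerivAt_stdNormalCDF x).log (stdNormalCDF_pos x).ne').deriv

lemma deriv_deriv_log_stdNormalCDF (x : ℝ) :
    deriv (deriv fun t => log (stdNormalCDF t)) x =
      -(φ x * (x * stdNormalCDF x + φ x)) / stdNormalCDF x ^ 2 := by
  rw [deriv_log_stdNormalCDF]
  have hquot := (hasDerivAt_gaussianPDFReal 0 1 x).fun_div (hasDerivAt_stdNormalCDF x)
    (stdNormalCDF_pos x).ne'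
  rw [hquot.deriv]
  simp only [sub_zero, NNReal.coe_one, div_one]
  ring

lemma deriv_deriv_log_stdNormalCDF_neg (x : ℝ) :
    deriv (deriv fun t => log (stdNormalCDF t)) x < 0 := by
  rw [deriv_deriv_log_stdNormalCDF]
  have hnum := mul_pos (gaussianPDFReal_pos 0 1 x one_ne_zero)
    (mul_stdNormalCDF_add_gaussianPDFReal_pos x)
  exact div_neg_of_neg_of_pos (neg_neg_of_pos hnum) (pow_pos (stdNormalCDF_pos x) 2)

/-- the probit log-likelihood contribution is strictly concave:
`l''(x) < 0` for all real `x`, where `l(x) = y log Φ(x) + (1-y) log(1-Φ(x))`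
and `Φ` is the standard normal CDF. -/
theorem stmt_3 (Φ : ℝ → ℝ)
    (hΦ : ∀ x, Φ x = ∫ t in Set.Iic x, (Real.sqrt (2 * π))⁻¹ * Real.exp (-t ^ 2 / 2))
    (y : ℝ) (hy : y ∈ ({0, 1} : Set ℝ))
    (l : ℝ → ℝ) (hl : ∀ x, l x = y * Real.log (Φ x) + (1 - y) * Real.log (1 - Φ x)) :
    ∀ x : ℝ, deriv (deriv l) x < 0 := by
  obtain rfl : Φ = stdNormalCDF := funext fun x => by
    simp [hΦ, stdNormalCDF, gaussianPDFReal]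
  intro x
  rcases hy with rfl | rfl
  · obtain rfl : l = fun t => log (stdNormalCDF (-t)) := funext fun t => by
      rw [hl, one_sub_stdNormalCDF]; ring
    rw [deriv_deriv_comp_neg (fun t => log (stdNormalCDF t))]
    exact deriv_deriv_log_stdNormalCDF_neg (-x)
  · obtain rfl : l = fun t => log (stdNormalCDF t) := funext fun t => by
      rw [hl]; ring
    exact deriv_deriv_log_stdNormalCDF_neg x
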